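/- Let v_1,...,v_n be vectors in ℂ^d, and for A ⊆ {1,...,n} let Π(A) denote the orthogonal projection onto span{v_i : i ∈ A}, with Π(∅) = 0. For a density matrix ρ set p_ρ(i) = Tr(ρ Π({i})), and for a permutation σ of {1,...,n} define C_σ(ρ) = ∑_{i=1}^{n} p_ρ(σ(i))·(Π({σ(i), σ(i+1),...,σ(n)}) − Π({σ(i+1),...,σ(n)})). Suppose σ is simultaneously a ranking permutation of p_{ρ_1} and of p_{ρ_2}, and let 0 ≤ λ ≤ 1. Then σ is also a ranking permutation of p_{λρ_1+(1−λ)ρ_2}, and C_σ(λρ_1 + (1−λ)ρ_2) = λ·C_σ(ρ_1) + (1−λ)·C_σ(ρ_2). -/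

import Mathlib

open scoped ComplexOrder

/-- The matrix (w.r.t. the standard basis) of the orthogonal projection of `ℂ^d`
onto the span of a set `S` of vectors. -/
noncomputable def projMat {d : ℕ} (S : Set (EuclideanSpace ℂ (Fin d))) :
    Matrix (Fin d) (Fin d) ℂ :=
  LinearMap.toMatrix (EuclideanSpace.basisFun (Fin d) ℂ).toBasis
    (EuclideanSpace.basisFun (Fin d) ℂ).toBasis
    ((Submodule.span ℂ S).subtype ∘ₗ
      (Submodule.orthogonalProjectionOnto (Submodule.span ℂ S)).toLinearMap)

/-- `Π(A)`: the orthogonal projection onto `span {v i : i ∈ A}` (equal to `0` for `A = ∅`). -/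
noncomputable def projMatSet {d n : ℕ} (v : Fin n → EuclideanSpace ℂ (Fin d))
    (A : Finset (Fin n)) : Matrix (Fin d) (Fin d) ℂ :=
  projMat (v '' ↑A)

/-- The set `{σ(i), σ(i+1), ..., σ(n)}`. -/
def tailSet {n : ℕ} (σ : Equiv.Perm (Fin n)) (i : Fin n) : Finset (Fin n) :=
  (Finset.univ.filter fun j : Fin n => i ≤ j).image σ

/-- The set `{σ(i+1), ..., σ(n)}` (empty when `i = n`). -/
def strictTailSet {n : ℕ} (σ : Equiv.Perm (Fin n)) (i : Fin n) : Finset (Fin n) :=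
  (Finset.univ.filter fun j : Fin n => i < j).image σ

/-- `p_ρ(i) = Tr(ρ Π({i}))`. -/
noncomputable def probFun {d n : ℕ} (v : Fin n → EuclideanSpace ℂ (Fin d))
    (ρ : Matrix (Fin d) (Fin d) ℂ) (i : Fin n) : ℝ :=
  ((ρ * projMat {v i}).trace).re

/-- The Choquet integral `C_σ(ρ)` computed with the cumulative projectors
determined by the permutation `σ`. -/
noncomputable def choquetMatrix {d n : ℕ} (v : Fin n → EuclideanSpace ℂ (Fin d))
    (σ : Equiv.Perm (Fin n)) (ρ : Matrix (Fin d) (Fin d) ℂ) :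
    Matrix (Fin d) (Fin d) ℂ :=
  ∑ i : Fin n, probFun v ρ (σ i) •
    (projMatSet v (tailSet σ i) - projMatSet v (strictTailSet σ i))

/-!
For a fixed permutation `σ` the Choquet integral is a fixed linear combination of the
projector differences `Π(tail) - Π(strict tail)`, with coefficients `p_ρ(σ i)` that are
real-linear in `ρ`. So `C_σ` is linear in `ρ` on every set of states ranked by `σ`, and
that set is convex because nonnegative combinations of monotone functions are monotone.
-/

section

variable {d n : ℕ} (v : Fin n → EuclideanSpace ℂ (Fin d)) (ρ₁ ρ₂ : Matrix (Fin d) (Fin d) ℂ)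
  (a b : ℝ)

lemma probFun_smul_add_smul (i : Fin n) :
    probFun v (a • ρ₁ + b • ρ₂) i = a * probFun v ρ₁ i + b * probFun v ρ₂ i := by
  simp [probFun, Matrix.add_mul, Matrix.trace_add, Matrix.trace_smul]

lemma choquetMatrix_smul_add_smul (σ : Equiv.Perm (Fin n)) :
    choquetMatrix v σ (a • ρ₁ + b • ρ₂) =
      a • choquetMatrix v σ ρ₁ + b • choquetMatrix v σ ρ₂ := by
  simp only [choquetMatrix, Finset.smul_sum, ← Finset.sum_add_distrib,
    probFun_smul_add_smul, add_smul, mul_smul]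

end

theorem choquetMatrix_comonotone_additive_general {d n : ℕ}
    (v : Fin n → EuclideanSpace ℂ (Fin d))
    (ρ₁ ρ₂ : Matrix (Fin d) (Fin d) ℂ)
    (σ : Equiv.Perm (Fin n))
    (hσ₁ : Monotone fun i => probFun v ρ₁ (σ i))
    (hσ₂ : Monotone fun i => probFun v ρ₂ (σ i))
    (l : ℝ) (hl0 : 0 ≤ l) (hl1 : l ≤ 1) :
    (Monotone fun i => probFun v (l • ρ₁ + (1 - l) • ρ₂) (σ i)) ∧
      choquetMatrix v σ (l • ρ₁ + (1 - l) • ρ₂) =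
        l • choquetMatrix v σ ρ₁ + (1 - l) • choquetMatrix v σ ρ₂ := by
  refine ⟨?_, choquetMatrix_smul_add_smul v ρ₁ ρ₂ l (1 - l) σ⟩
  simp only [probFun_smul_add_smul]
  exact (hσ₁.const_mul hl0).add (hσ₂.const_mul (sub_nonneg.2 hl1))

/-- if `σ` is simultaneously a ranking permutation of `p_{ρ₁}` and of
`p_{ρ₂}` (i.e. `ρ₁, ρ₂` are comonotonic) and `0 ≤ λ ≤ 1`, then `σ` is also a
ranking permutation of `p` of the mixture, and the Choquet integral is affine on
the segment: `C_σ(λρ₁ + (1−λ)ρ₂) = λ C_σ(ρ₁) + (1−λ) C_σ(ρ₂)`. -/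
theorem choquetMatrix_comonotone_additive {d n : ℕ}
    (v : Fin n → EuclideanSpace ℂ (Fin d))
    (ρ₁ ρ₂ : Matrix (Fin d) (Fin d) ℂ)
    (hρ₁ : ρ₁.PosSemidef) (hρ₁tr : ρ₁.trace = 1)
    (hρ₂ : ρ₂.PosSemidef) (hρ₂tr : ρ₂.trace = 1)
    (σ : Equiv.Perm (Fin n))
    (hσ₁ : Monotone fun i => probFun v ρ₁ (σ i))
    (hσ₂ : Monotone fun i => probFun v ρ₂ (σ i))
    (l : ℝ) (hl0 : 0 ≤ l) (hl1 : l ≤ 1) :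
    (Monotone fun i => probFun v (l • ρ₁ + (1 - l) • ρ₂) (σ i)) ∧
      choquetMatrix v σ (l • ρ₁ + (1 - l) • ρ₂) =
        l • choquetMatrix v σ ρ₁ + (1 - l) • choquetMatrix v σ ρ₂ :=
  choquetMatrix_comonotone_additive_general v ρ₁ ρ₂ σ hσ₁ hσ₂ l hl0 hl1
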